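/- Let a ≥ 2 be an integer and p ∈ (0,1) with q = 1 − p. Let z₁ ∈ {1,…,a−1}, z₂ = a − z₁, r = (q/p)^{a/2 − z₁}, and define π₁ = r/(1+r), π₂ = 1/(1+r). Then π₁ + π₂ = 1, π₁/π₂ = r, and for every γ ∈ (0,1): π₁·u(z₁;γ) + π₂·u(z₂;γ) = C*·(π₁·s(z₁;γ) + π₂·s(z₂;γ)), where C* = (q/p)^{a/2}/(1 + (q/p)^{a/2}). Moreover (π₁, π₂) is the unique pair of nonnegative reals summing to 1 with ratio π₁/π₂ = r. -/

import Mathlib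

/-- Eigenvalue `λ_ν = 2√(p(1−p))·cos(πν/a)`. -/
noncomputable def lam (a : ℕ) (p : ℝ) (ν : ℕ) : ℝ :=
  2 * Real.sqrt (p * (1 - p)) * Real.cos (Real.pi * ν / a)

/-- Spectral transfer function `f_ν(γ) = λ_ν(1−γ)/(1 − λ_ν(1−γ))`. -/
noncomputable def fer (a : ℕ) (p : ℝ) (ν : ℕ) (γ : ℝ) : ℝ :=
  lam a p ν * (1 - γ) / (1 - lam a p ν * (1 - γ))

/-- Spectral coefficient `A_ν(w) = (2/a)·(q/p)^{w/2}·sin(πνw/a)·sin(πν/a)`. -/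
noncomputable def Acoef (a : ℕ) (p : ℝ) (ν w : ℕ) : ℝ :=
  (2 / a) * ((1 - p) / p) ^ ((w : ℝ) / 2) *
    Real.sin (Real.pi * ν * w / a) * Real.sin (Real.pi * ν / a)

/-- Spectral coefficient `B_ν(w) = (2/a)·(p/q)^{(a−w)/2}·sin(πν(a−w)/a)·sin(πν/a)`. -/
noncomputable def Bcoef (a : ℕ) (p : ℝ) (ν w : ℕ) : ℝ :=
  (2 / a) * (p / (1 - p)) ^ (((a : ℝ) - w) / 2) *
    Real.sin (Real.pi * ν * ((a : ℝ) - w) / a) * Real.sin (Real.pi * ν / a)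

/-- Discounted first-cycle ruin probability `u(z;γ) = Σ_ν A_ν(z)·f_ν(γ)`. -/
noncomputable def usum (a : ℕ) (p : ℝ) (z : ℕ) (γ : ℝ) : ℝ :=
  ∑ ν ∈ Finset.Icc 1 (a - 1), Acoef a p ν z * fer a p ν γ

/-- Discounted first-cycle absorption probability
`s(z;γ) = Σ_ν (A_ν(z)+B_ν(z))·f_ν(γ)`. -/
noncomputable def ssum (a : ℕ) (p : ℝ) (z : ℕ) (γ : ℝ) : ℝ :=
  ∑ ν ∈ Finset.Icc 1 (a - 1), (Acoef a p ν z + Bcoef a p ν z) * fer a p ν γ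

/-!
Put `ρ = q/p`. Since `A_ν(a − z)` and `B_ν(z)` contain the same sine,
`B_ν(z) = ρ^{z−a} A_ν(a − z)`: the reflection `z ↦ a − z` exchanges the two absorbing boundaries.
For the sites `z₁` and `z₂ = a − z₁` this gives, for every mode `ν`, the balance
`r A_ν(z₁) + A_ν(z₂) = ρ^{a/2} (r B_ν(z₁) + B_ν(z₂))` with `r = ρ^{a/2−z₁}`. Multiplying by `f_ν(γ)` and summing, the `π`-weighted ruin and
absorption probabilities stand in the ratio `ρ^{a/2}/(1 + ρ^{a/2}) = C*`, independently of `γ`.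
-/

lemma one_sub_div_pos {p : ℝ} (hp : p ∈ Set.Ioo (0 : ℝ) 1) : 0 < (1 - p) / p :=
  div_pos (sub_pos.mpr hp.2) hp.1

lemma Bcoef_eq_rpow_mul_Acoef_sub {a : ℕ} {p : ℝ} (hp : p ∈ Set.Ioo (0 : ℝ) 1) (ν : ℕ)
    {z : ℕ} (hz : z ≤ a) :
    Bcoef a p ν z = ((1 - p) / p) ^ ((z : ℝ) - a) * Acoef a p ν (a - z) := by
  have hρ := one_sub_div_pos hp
  have hpow : (p / (1 - p)) ^ (((a : ℝ) - z) / 2)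
      = ((1 - p) / p) ^ ((z : ℝ) - a) * ((1 - p) / p) ^ (((a : ℝ) - z) / 2) := by
    rw [← inv_div, Real.inv_rpow hρ.le, ← Real.rpow_neg hρ.le, ← Real.rpow_add hρ]
    ring_nf
  unfold Acoef Bcoef
  rw [Nat.cast_sub hz, hpow]
  ring

lemma Acoef_balance {a : ℕ} {p : ℝ} (hp : p ∈ Set.Ioo (0 : ℝ) 1) (ν : ℕ) {z : ℕ} (hz : z ≤ a) :
    ((1 - p) / p) ^ ((a : ℝ) / 2 - z) * Acoef a p ν z + Acoef a p ν (a - z)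
      = ((1 - p) / p) ^ ((a : ℝ) / 2) *
        (((1 - p) / p) ^ ((a : ℝ) / 2 - z) * Bcoef a p ν z + Bcoef a p ν (a - z)) := by
  have hρ := one_sub_div_pos hp
  rw [Bcoef_eq_rpow_mul_Acoef_sub hp ν hz, Bcoef_eq_rpow_mul_Acoef_sub hp ν (Nat.sub_le a z),
    Nat.sub_sub_self hz, Nat.cast_sub hz]
  have hcancel : ((1 - p) / p) ^ ((a : ℝ) / 2) * ((1 - p) / p) ^ ((a : ℝ) / 2 - z)
      * ((1 - p) / p) ^ ((z : ℝ) - a) = 1 := by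
    rw [← Real.rpow_add hρ, ← Real.rpow_add hρ]
    ring_nf
    exact Real.rpow_zero _
  have hshift : ((1 - p) / p) ^ ((a : ℝ) / 2) * ((1 - p) / p) ^ ((a : ℝ) - z - a)
      = ((1 - p) / p) ^ ((a : ℝ) / 2 - z) := by
    rw [← Real.rpow_add hρ]
    ring_nf
  linear_combination (-Acoef a p ν (a - z)) * hcancel - Acoef a p ν z * hshift

lemma ssum_sub_usum (a : ℕ) (p : ℝ) (z : ℕ) (γ : ℝ) :
    ssum a p z γ - usum a p z γ = ∑ ν ∈ Finset.Icc 1 (a - 1), Bcoef a p ν z * fer a p ν γ := by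
  unfold ssum usum
  rw [← Finset.sum_sub_distrib]
  exact Finset.sum_congr rfl fun ν _ => by ring

lemma usum_balance {a : ℕ} {p : ℝ} (hp : p ∈ Set.Ioo (0 : ℝ) 1) {z : ℕ} (hz : z ≤ a) (γ : ℝ) :
    ((1 - p) / p) ^ ((a : ℝ) / 2 - z) * usum a p z γ + usum a p (a - z) γ
      = ((1 - p) / p) ^ ((a : ℝ) / 2) *
        (((1 - p) / p) ^ ((a : ℝ) / 2 - z) * (ssum a p z γ - usum a p z γ)
          + (ssum a p (a - z) γ - usum a p (a - z) γ)) := by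
  rw [ssum_sub_usum, ssum_sub_usum]
  unfold usum
  simp only [Finset.mul_sum, ← Finset.sum_add_distrib]
  refine Finset.sum_congr rfl fun ν _ => ?_
  linear_combination fer a p ν γ * Acoef_balance hp ν hz

lemma weighted_eq_mul_weighted_of_balance {r R u₁ u₂ s₁ s₂ : ℝ} (hr : 0 < r) (hR : 0 < R)
    (h : r * u₁ + u₂ = R * (r * (s₁ - u₁) + (s₂ - u₂))) :
    r / (1 + r) * u₁ + 1 / (1 + r) * u₂ = R / (1 + R) * (r / (1 + r) * s₁ + 1 / (1 + r) * s₂) := by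
  field_simp
  linear_combination h

lemma eq_div_one_add_of_add_eq_one_of_div_eq {r x y : ℝ} (hr : 0 < r) (hsum : x + y = 1)
    (hrat : x / y = r) : x = r / (1 + r) ∧ y = 1 / (1 + r) := by
  have hy : y ≠ 0 := by
    rintro rfl
    simp [hr.ne] at hrat
  have hx : x = r * y := by rwa [div_eq_iff hy] at hrat
  have hy' : y = 1 / (1 + r) := by
    rw [eq_div_iff (by positivity)]
    linarith
  exact ⟨by rw [hx, hy']; ring, hy'⟩

theorem stmt_16_general (a : ℕ) (p : ℝ) (hp : p ∈ Set.Ioo (0 : ℝ) 1)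
    (z₁ : ℕ) (hz₁ : z₁ ∈ Finset.Icc 1 (a - 1)) :
    let r : ℝ := (((1 - p) / p) ^ ((a : ℝ) / 2 - z₁) : ℝ)
    let π₁ : ℝ := r / (1 + r)
    let π₂ : ℝ := 1 / (1 + r)
    let Cstar : ℝ := ((1 - p) / p) ^ ((a : ℝ) / 2) / (1 + ((1 - p) / p) ^ ((a : ℝ) / 2))
    π₁ + π₂ = 1 ∧ π₁ / π₂ = r ∧
    (∀ γ ∈ Set.Ioo (0 : ℝ) 1,
      π₁ * usum a p z₁ γ + π₂ * usum a p (a - z₁) γ =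
        Cstar * (π₁ * ssum a p z₁ γ + π₂ * ssum a p (a - z₁) γ)) ∧
    (∀ x y : ℝ, 0 ≤ x → 0 ≤ y → x + y = 1 → x / y = r → x = π₁ ∧ y = π₂) := by
  intro r π₁ π₂ Cstar
  have hρ := one_sub_div_pos hp
  have hr : 0 < r := Real.rpow_pos_of_pos hρ _
  have hz : z₁ ≤ a := (Finset.mem_Icc.mp hz₁).2.trans (Nat.sub_le a 1)
  refine ⟨?_, ?_, fun γ _ => ?_, fun x y _ _ hsum hrat => ?_⟩
  · rw [← add_div, add_comm, div_self (by positivity)]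
  · simp only [π₁, π₂]
    field_simp
  · exact weighted_eq_mul_weighted_of_balance hr (Real.rpow_pos_of_pos hρ _)
      (usum_balance hp hz γ)
  · exact eq_div_one_add_of_add_eq_one_of_div_eq hr hsum hrat

/-- the two-site critical reset distribution on symmetric sites
`z₁` and `z₂ = a − z₁`: `π₁ = r/(1+r)`, `π₂ = 1/(1+r)` with
`r = (q/p)^{a/2−z₁}` is the unique nonnegative pair summing to 1 with ratio
`r`, and it makes the coupling constant equal to `C*` for every `γ`. -/
theorem stmt_16 (a : ℕ) (ha : 2 ≤ a) (p : ℝ) (hp : p ∈ Set.Ioo (0 : ℝ) 1)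
    (z₁ : ℕ) (hz₁ : z₁ ∈ Finset.Icc 1 (a - 1)) :
    let r : ℝ := (((1 - p) / p) ^ ((a : ℝ) / 2 - z₁) : ℝ)
    let π₁ : ℝ := r / (1 + r)
    let π₂ : ℝ := 1 / (1 + r)
    let Cstar : ℝ := ((1 - p) / p) ^ ((a : ℝ) / 2) / (1 + ((1 - p) / p) ^ ((a : ℝ) / 2))
    π₁ + π₂ = 1 ∧ π₁ / π₂ = r ∧
    (∀ γ ∈ Set.Ioo (0 : ℝ) 1,
      π₁ * usum a p z₁ γ + π₂ * usum a p (a - z₁) γ =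
        Cstar * (π₁ * ssum a p z₁ γ + π₂ * ssum a p (a - z₁) γ)) ∧
    (∀ x y : ℝ, 0 ≤ x → 0 ≤ y → x + y = 1 → x / y = r → x = π₁ ∧ y = π₂) :=
  stmt_16_general a p hp z₁ hz₁
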